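/- Let a > 0, ε ∈ (0, 1/2), and d ≥ 0 a natural number. If there exists a real polynomial p of degree at most d with sup_{x ∈ [-1,1]} |p(x) - e^{a(x-1)}| ≤ ε, then setting n = d+1 one has (a/2)^n / n! ≤ 2εe^a/π, and consequently (e·a/(2n))^n ≤ e·√n · 2εe^a/π. -/

import Mathlib

/-!
Under `x = cos θ`, the Chebyshev coefficient `∫₀^π f (cos θ) cos (n θ) dθ` annihilates every
polynomial of degree `< n`, because `∫₀^π cos θ ^ k cos (n θ) dθ = 0` for `k < n`; so an
`ε`-approximation of `f` on `[-1, 1]` by such a polynomial bounds the coefficient by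
`ε ∫₀^π |cos (n θ)| dθ = 2ε`. For `f x = e^{a x}` (approximated by the polynomial scaled by
`e^a`) the coefficient is `π Iₙ(a)`: expanding the exponential, all moments
`∫₀^π cos θ ^ k cos (n θ) dθ` are nonnegative and the `k = n` one is `π / 2ⁿ`, so it is at least
`π (a/2)ⁿ / n!`. The second inequality follows from `n! ≤ e √n (n/e)ⁿ`, i.e. from the Stirling
sequence being antitone with first term `e / √2`.
-/

open Real Finset intervalIntegral
open MeasureTheory (volume)
open scoped Nat

noncomputable def cosMoment (k m : ℕ) : ℝ := ∫ θ in (0)..π, cos θ ^ k * cos (m * θ)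

lemma cosMoment_zero_zero : cosMoment 0 0 = π := by
  simp [cosMoment]

lemma cosMoment_zero_left {m : ℕ} (hm : m ≠ 0) : cosMoment 0 m = 0 := by
  have hm' : (m : ℝ) ≠ 0 := by exact_mod_cast hm
  simp only [cosMoment, pow_zero, one_mul]
  rw [integral_comp_mul_left (fun x => cos x) hm']
  simp [integral_cos, sin_nat_mul_pi]

lemma cosMoment_succ_zero (k : ℕ) : cosMoment (k + 1) 0 = cosMoment k 1 := by
  simp only [cosMoment]
  exact integral_congr fun θ _ => by simp [pow_succ]

lemma cosMoment_succ_succ (k m : ℕ) :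
    cosMoment (k + 1) (m + 1) = (cosMoment k (m + 2) + cosMoment k m) / 2 := by
  have product_to_sum (θ : ℝ) : cos θ ^ (k + 1) * cos ((m + 1 : ℕ) * θ) =
      (cos θ ^ k * cos ((m + 2 : ℕ) * θ) + cos θ ^ k * cos (m * θ)) / 2 := by
    have h₁ : ((m + 2 : ℕ) : ℝ) * θ = (m + 1 : ℕ) * θ + θ := by push_cast; ring
    have h₂ : (m : ℝ) * θ = (m + 1 : ℕ) * θ - θ := by push_cast; ring
    rw [h₁, h₂, cos_add, cos_sub]
    ring
  have hint (j : ℕ) : IntervalIntegrable (fun θ => cos θ ^ k * cos (j * θ)) volume 0 π :=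
    (by fun_prop : Continuous fun θ => cos θ ^ k * cos (j * θ)).intervalIntegrable _ _
  simp only [cosMoment, product_to_sum]
  rw [integral_div, integral_add (hint _) (hint _)]

lemma cosMoment_nonneg (k m : ℕ) : 0 ≤ cosMoment k m := by
  induction k generalizing m with
  | zero =>
    rcases eq_or_ne m 0 with rfl | hm
    · rw [cosMoment_zero_zero]; exact pi_pos.le
    · rw [cosMoment_zero_left hm]
  | succ k ih =>
    cases m with
    | zero => rw [cosMoment_succ_zero]; exact ih 1
    | succ m => rw [cosMoment_succ_succ]; linarith [ih (m + 2), ih m]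

lemma cosMoment_eq_zero_of_lt {k m : ℕ} (h : k < m) : cosMoment k m = 0 := by
  induction k generalizing m with
  | zero => exact cosMoment_zero_left h.ne'
  | succ k ih =>
    obtain ⟨m, rfl⟩ : ∃ m', m = m' + 1 := Nat.exists_eq_add_one.2 (by omega)
    rw [cosMoment_succ_succ, ih (by omega), ih (by omega)]
    norm_num

lemma cosMoment_self (k : ℕ) : cosMoment k k = π / 2 ^ k := by
  induction k with
  | zero => simp [cosMoment_zero_zero]
  | succ k ih =>
    rw [cosMoment_succ_succ, cosMoment_eq_zero_of_lt (by omega), ih, pow_succ]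
    ring

lemma integral_eval_cos_mul_cos_eq_zero {p : Polynomial ℝ} {n : ℕ} (hp : p.natDegree < n) :
    ∫ θ in (0)..π, p.eval (cos θ) * cos (n * θ) = 0 := by
  have hint (i : ℕ) :
      IntervalIntegrable (fun θ => p.coeff i * (cos θ ^ i * cos (n * θ))) volume 0 π :=
    (by fun_prop : Continuous fun θ => p.coeff i * (cos θ ^ i * cos (n * θ))).intervalIntegrable
      _ _
  simp_rw [Polynomial.eval_eq_sum_range' hp, sum_mul, mul_assoc]
  rw [integral_finsetSum fun i _ => hint i]
  refine sum_eq_zero fun i hi => ?_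
  rw [integral_const_mul]
  exact mul_eq_zero_of_right _ (cosMoment_eq_zero_of_lt (mem_range.1 hi))

lemma integral_abs_cos : ∫ θ in (0)..π, |cos θ| = 2 := by
  have hint (a b : ℝ) : IntervalIntegrable (fun θ => |cos θ|) volume a b :=
    (by fun_prop : Continuous fun θ => |cos θ|).intervalIntegrable _ _
  rw [← integral_add_adjacent_intervals (hint 0 (π / 2)) (hint (π / 2) π)]
  have first_half : ∫ θ in (0)..(π / 2), |cos θ| = ∫ θ in (0)..(π / 2), cos θ := by
    refine integral_congr fun θ hθ => abs_of_nonneg (cos_nonneg_of_mem_Icc ?_)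
    rw [Set.uIcc_of_le (by positivity)] at hθ
    exact ⟨by linarith [hθ.1, pi_pos], hθ.2⟩
  have second_half : ∫ θ in (π / 2)..π, |cos θ| = ∫ θ in (π / 2)..π, -cos θ := by
    refine integral_congr fun θ hθ => abs_of_nonpos (cos_nonpos_of_pi_div_two_le_of_le ?_ ?_)
    all_goals rw [Set.uIcc_of_le (by linarith [pi_pos])] at hθ
    · exact hθ.1
    · linarith [hθ.2, pi_pos]
  rw [first_half, second_half, integral_neg, integral_cos, integral_cos]
  norm_num

lemma integral_abs_cos_nat_mul {n : ℕ} (hn : n ≠ 0) : ∫ θ in (0)..π, |cos (n * θ)| = 2 := by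
  have hn' : (n : ℝ) ≠ 0 := by exact_mod_cast hn
  have hper : Function.Periodic (fun x => |cos x|) π := fun x => by simp [cos_add_pi]
  have hshift := hper.intervalIntegral_add_zsmul_eq (n : ℤ) 0
    fun _ _ => (by fun_prop : Continuous fun θ => |cos θ|).intervalIntegrable _ _
  simp only [zero_add, zsmul_eq_mul, Int.cast_natCast] at hshift
  rw [integral_comp_mul_left (fun x => |cos x|) hn', mul_zero, hshift, integral_abs_cos,
    smul_eq_mul]
  field_simp

lemma abs_integral_comp_cos_mul_cos_le {f : ℝ → ℝ} (hf : Continuous f) {p : Polynomial ℝ}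
    {n : ℕ} (hp : p.natDegree < n) {ε : ℝ}
    (happrox : ∀ x ∈ Set.Icc (-1 : ℝ) 1, |p.eval x - f x| ≤ ε) :
    |∫ θ in (0)..π, f (cos θ) * cos (n * θ)| ≤ 2 * ε := by
  have hfc : Continuous fun θ => f (cos θ) * cos (n * θ) := by fun_prop
  have hpc : Continuous fun θ => p.eval (cos θ) * cos (n * θ) := by fun_prop
  have horth : ∫ θ in (0)..π, f (cos θ) * cos (n * θ) =
      ∫ θ in (0)..π, (f (cos θ) - p.eval (cos θ)) * cos (n * θ) := by
    simp_rw [sub_mul]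
    rw [integral_sub (hfc.intervalIntegrable _ _) (hpc.intervalIntegrable _ _),
      integral_eval_cos_mul_cos_eq_zero hp, sub_zero]
  have hdiff : Continuous fun θ => |(f (cos θ) - p.eval (cos θ)) * cos (n * θ)| := by fun_prop
  have hpointwise (θ : ℝ) :
      |(f (cos θ) - p.eval (cos θ)) * cos (n * θ)| ≤ ε * |cos (n * θ)| := by
    rw [abs_mul, abs_sub_comm]
    gcongr
    exact happrox _ ⟨neg_one_le_cos θ, cos_le_one θ⟩
  calc |∫ θ in (0)..π, f (cos θ) * cos (n * θ)|
      ≤ ∫ θ in (0)..π, |(f (cos θ) - p.eval (cos θ)) * cos (n * θ)| := by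
        rw [horth]; exact abs_integral_le_integral_abs pi_pos.le
    _ ≤ ∫ θ in (0)..π, ε * |cos (n * θ)| :=
        integral_mono_on pi_pos.le
          (hdiff.intervalIntegrable _ _)
          ((by fun_prop : Continuous fun θ => ε * |cos (n * θ)|).intervalIntegrable _ _)
          fun θ _ => hpointwise θ
    _ = 2 * ε := by
        rw [integral_const_mul, integral_abs_cos_nat_mul (by omega), mul_comm]

lemma hasSum_cosMoment_mul (a : ℝ) (n : ℕ) :
    HasSum (fun k => a ^ k / k ! * cosMoment k n)
      (∫ θ in (0)..π, exp (a * cos θ) * cos (n * θ)) := by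
  have hterm (k : ℕ) : ∫ θ in (0)..π, a ^ k / k ! * (cos θ ^ k * cos (n * θ)) =
      a ^ k / k ! * cosMoment k n := integral_const_mul _ _
  simp_rw [← hterm]
  refine hasSum_integral_of_dominated_convergence (fun k _ => |a| ^ k / k !)
    (fun k => (by fun_prop : Continuous fun θ => a ^ k / k ! * (cos θ ^ k * cos (n * θ)))
      |>.aestronglyMeasurable) (fun k => .of_forall fun θ _ => ?_)
    (.of_forall fun _ _ => (NormedSpace.expSeries_div_hasSum_exp |a|).summable)
    intervalIntegrable_const (.of_forall fun θ _ => ?_)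
  · rw [norm_mul, norm_mul, norm_pow, norm_div, norm_pow, Real.norm_eq_abs, Real.norm_eq_abs,
      Real.norm_eq_abs, Nat.abs_cast]
    have hcos : |cos θ| ^ k * |cos (n * θ)| ≤ 1 :=
      mul_le_one₀ (pow_le_one₀ (abs_nonneg _) (abs_cos_le_one θ)) (abs_nonneg _)
        (abs_cos_le_one _)
    calc |a| ^ k / k ! * (|cos θ| ^ k * |cos (n * θ)|) ≤ |a| ^ k / k ! * 1 := by gcongr
      _ = |a| ^ k / k ! := mul_one _
  · have hseries : (fun k => a ^ k / k ! * (cos θ ^ k * cos (n * θ))) =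
        fun k => (a * cos θ) ^ k / k ! * cos (n * θ) := by
      funext k
      rw [mul_pow]
      ring
    rw [hseries, Real.exp_eq_exp_ℝ]
    exact (NormedSpace.expSeries_div_hasSum_exp (a * cos θ)).mul_right _

lemma pi_mul_div_two_pow_div_factorial_le_integral {a : ℝ} (ha : 0 ≤ a) (n : ℕ) :
    π * (a / 2) ^ n / n ! ≤ ∫ θ in (0)..π, exp (a * cos θ) * cos (n * θ) := by
  have hle := le_hasSum (hasSum_cosMoment_mul a n) n fun k _ => by
    have := cosMoment_nonneg k n
    positivity
  rw [cosMoment_self] at hle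
  refine le_of_eq_of_le ?_ hle
  rw [div_pow]
  field_simp

lemma factorial_le_exp_one_mul_sqrt_mul {n : ℕ} (hn : n ≠ 0) :
    (n ! : ℝ) ≤ exp 1 * √n * (n / exp 1) ^ n := by
  obtain ⟨m, rfl⟩ := Nat.exists_eq_add_one.2 (Nat.pos_of_ne_zero hn)
  have h := Stirling.stirlingSeq'_antitone (Nat.zero_le m)
  simp only [Function.comp_apply, Stirling.stirlingSeq_one] at h
  rw [Stirling.stirlingSeq, div_le_iff₀ (by positivity), Real.sqrt_mul zero_le_two] at h
  refine h.trans_eq ?_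
  push_cast
  field_simp

lemma exp_one_mul_div_pow_le {x : ℝ} (hx : 0 ≤ x) {n : ℕ} (hn : n ≠ 0) :
    (exp 1 * x / n) ^ n ≤ exp 1 * √n * (x ^ n / n !) := by
  have hcancel : exp 1 / n * (n / exp 1) = 1 := by field_simp
  calc (exp 1 * x / n) ^ n = (exp 1 / n) ^ n * x ^ n / n ! * n ! := by
        rw [div_mul_cancel₀ _ (by positivity), ← mul_pow, div_mul_eq_mul_div]
    _ ≤ (exp 1 / n) ^ n * x ^ n / n ! * (exp 1 * √n * (n / exp 1) ^ n) := by
        gcongr; exact factorial_le_exp_one_mul_sqrt_mul hn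
    _ = exp 1 * √n * (x ^ n / n !) * (exp 1 / n * (n / exp 1)) ^ n := by ring
    _ = exp 1 * √n * (x ^ n / n !) := by rw [hcancel, one_pow, mul_one]

theorem stmt4_general (a ε : ℝ) (ha : 0 < a) (d : ℕ)
    (p : Polynomial ℝ) (hdeg : p.natDegree ≤ d)
    (happrox : ∀ x ∈ Set.Icc (-1 : ℝ) 1, |p.eval x - Real.exp (a * (x - 1))| ≤ ε) :
    (a / 2) ^ (d + 1) / (((d : ℕ) + 1).factorial : ℝ) ≤ 2 * ε * Real.exp a / Real.pi ∧
      (Real.exp 1 * a / (2 * ((d : ℝ) + 1))) ^ (d + 1) ≤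
        Real.exp 1 * Real.sqrt ((d : ℝ) + 1) * (2 * ε * Real.exp a / Real.pi) := by
  have hscaled : ∀ x ∈ Set.Icc (-1 : ℝ) 1,
      |(Polynomial.C (exp a) * p).eval x - exp (a * x)| ≤ exp a * ε := fun x hx => by
    rw [Polynomial.eval_mul, Polynomial.eval_C,
      show a * x = a + a * (x - 1) by ring, exp_add, ← mul_sub, abs_mul, abs_of_pos (exp_pos a)]
    exact mul_le_mul_of_nonneg_left (happrox x hx) (exp_pos a).le
  have hchebyshev := abs_integral_comp_cos_mul_cos_le (by fun_prop)
    ((Polynomial.natDegree_C_mul_le _ _).trans_lt (Nat.lt_succ_of_le hdeg)) hscaled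
  have hbessel := pi_mul_div_two_pow_div_factorial_le_integral ha.le (d + 1)
  have hmain := hbessel.trans ((le_abs_self _).trans hchebyshev)
  have hfirst : (a / 2) ^ (d + 1) / ((d + 1)! : ℝ) ≤ 2 * ε * exp a / π := by
    rw [mul_div_assoc] at hmain
    rw [le_div_iff₀ pi_pos]
    linarith
  refine ⟨hfirst, ?_⟩
  calc (exp 1 * a / (2 * ((d : ℝ) + 1))) ^ (d + 1)
      = (exp 1 * (a / 2) / ((d + 1 : ℕ) : ℝ)) ^ (d + 1) := by push_cast; field_simp
    _ ≤ exp 1 * √((d + 1 : ℕ) : ℝ) * ((a / 2) ^ (d + 1) / (d + 1)!) :=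
        exp_one_mul_div_pow_le (by positivity) d.succ_ne_zero
    _ ≤ exp 1 * √((d : ℝ) + 1) * (2 * ε * exp a / π) := by push_cast; gcongr

/-- Stirling/Lambert-W step: if a degree-`d` polynomial approximates `exp (a*(x-1))`
uniformly on `[-1,1]` to error `ε ∈ (0, 1/2)`, then with `n = d + 1` one has
`(a/2)^n / n! ≤ 2 ε e^a / π` and consequently `(e·a/(2n))^n ≤ e·√n · 2 ε e^a / π`. -/
theorem stmt4 (a ε : ℝ) (ha : 0 < a) (hε : ε ∈ Set.Ioo (0 : ℝ) (1 / 2)) (d : ℕ)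
    (p : Polynomial ℝ) (hdeg : p.natDegree ≤ d)
    (happrox : ∀ x ∈ Set.Icc (-1 : ℝ) 1, |p.eval x - Real.exp (a * (x - 1))| ≤ ε) :
    (a / 2) ^ (d + 1) / (((d : ℕ) + 1).factorial : ℝ) ≤ 2 * ε * Real.exp a / Real.pi ∧
      (Real.exp 1 * a / (2 * ((d : ℝ) + 1))) ^ (d + 1) ≤
        Real.exp 1 * Real.sqrt ((d : ℝ) + 1) * (2 * ε * Real.exp a / Real.pi) :=
  stmt4_general a ε ha d p hdeg happrox
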